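/- arXiv:1202.1573 — 2 statements merged into one kernel-verified Lean document; each statement's English description precedes it below -/
import Mathlib

section
/- Let H be a real inner product space, let T > 0, and let θ : [0,T] → H be differentiable with θ(0) = 0. Let g : [0,T] → [0,∞) be continuous, and suppose that ⟨θ'(t), θ(t)⟩ ≤ g(t)·‖θ(t)‖ for every t ∈ [0,T]. Then ‖θ(t)‖ ≤ ∫₀ᵗ g(s) ds for every t ∈ [0,T]. -/
/-!
Since `t ↦ ‖θ t‖` need not be differentiable where `θ` vanishes, work with the smooth
regularization `√(‖θ t‖² + δ²)`: its derivative `⟪θ', θ⟫ / √(‖θ‖² + δ²)` is at most `g`, so its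
increment is at most `∫ g`, and it differs from `‖θ t‖` by at most `δ`. Let `δ → 0`.
-/

open RealInnerProductSpace Set

theorem norm_le_sqrt_norm_sq_add_sq {E : Type*} [SeminormedAddCommGroup E] (x : E) (δ : ℝ) :
    ‖x‖ ≤ √(‖x‖ ^ 2 + δ ^ 2) :=
  Real.le_sqrt_of_sq_le (le_add_of_nonneg_right (sq_nonneg δ))

theorem sqrt_norm_sq_add_sq_le_norm_add {E : Type*} [SeminormedAddCommGroup E] (x : E) {δ : ℝ}
    (hδ : 0 ≤ δ) : √(‖x‖ ^ 2 + δ ^ 2) ≤ ‖x‖ + δ :=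
  Real.sqrt_le_iff.2 ⟨by positivity, by nlinarith [norm_nonneg x]⟩

section InnerProductSpace

variable {H : Type*} [NormedAddCommGroup H] [InnerProductSpace ℝ H]

theorem HasDerivWithinAt.sqrt_norm_sq_add_sq {θ : ℝ → H} {θ' : H} {s : Set ℝ} {t δ : ℝ}
    (hθ : HasDerivWithinAt θ θ' s t) (hδ : δ ≠ 0) :
    HasDerivWithinAt (fun u => √(‖θ u‖ ^ 2 + δ ^ 2)) (⟪θ', θ t⟫ / √(‖θ t‖ ^ 2 + δ ^ 2)) s t := by
  convert (hθ.norm_sq.add_const (δ ^ 2)).sqrt (by positivity) using 1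
  rw [real_inner_comm, mul_div_mul_left _ _ two_ne_zero]

theorem inner_div_sqrt_norm_sq_add_sq_le {v x : H} {c δ : ℝ} (hδ : δ ≠ 0) (hc : 0 ≤ c)
    (h : ⟪v, x⟫ ≤ c * ‖x‖) : ⟪v, x⟫ / √(‖x‖ ^ 2 + δ ^ 2) ≤ c := by
  rw [div_le_iff₀ (by positivity)]
  exact h.trans (mul_le_mul_of_nonneg_left (norm_le_sqrt_norm_sq_add_sq x δ) hc)

variable {θ θ' : ℝ → H} {g : ℝ → ℝ} {a b : ℝ}

theorem sqrt_norm_sq_add_sq_sub_le_integral (hab : a ≤ b)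
    (hθ : ∀ t ∈ Icc a b, HasDerivWithinAt θ (θ' t) (Icc a b) t)
    (hg_cont : ContinuousOn g (Icc a b)) (hg_nonneg : ∀ t ∈ Icc a b, 0 ≤ g t)
    (hbound : ∀ t ∈ Icc a b, ⟪θ' t, θ t⟫ ≤ g t * ‖θ t‖) {δ : ℝ} (hδ : δ ≠ 0) :
    √(‖θ b‖ ^ 2 + δ ^ 2) - √(‖θ a‖ ^ 2 + δ ^ 2) ≤ ∫ s in a..b, g s := by
  refine intervalIntegral.sub_le_integral_of_hasDeriv_right_of_le hab
    (g' := fun t => ⟪θ' t, θ t⟫ / √(‖θ t‖ ^ 2 + δ ^ 2))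
    (fun t ht => ((hθ t ht).sqrt_norm_sq_add_sq hδ).continuousWithinAt) (fun t ht => ?_)
    (hg_cont.integrableOn_compact isCompact_Icc) (fun t ht => ?_)
  · have hθt := (hθ t (Ioo_subset_Icc_self ht)).hasDerivAt (Icc_mem_nhds ht.1 ht.2)
    exact hθt.hasDerivWithinAt.sqrt_norm_sq_add_sq hδ
  · have ht := Ioo_subset_Icc_self ht
    exact inner_div_sqrt_norm_sq_add_sq_le hδ (hg_nonneg t ht) (hbound t ht)

theorem norm_sub_norm_le_integral_of_inner_deriv_le (hab : a ≤ b)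
    (hθ : ∀ t ∈ Icc a b, HasDerivWithinAt θ (θ' t) (Icc a b) t)
    (hg_cont : ContinuousOn g (Icc a b)) (hg_nonneg : ∀ t ∈ Icc a b, 0 ≤ g t)
    (hbound : ∀ t ∈ Icc a b, ⟪θ' t, θ t⟫ ≤ g t * ‖θ t‖) :
    ‖θ b‖ - ‖θ a‖ ≤ ∫ s in a..b, g s := by
  refine le_of_forall_pos_le_add fun δ hδ => ?_
  have := sqrt_norm_sq_add_sq_sub_le_integral hab hθ hg_cont hg_nonneg hbound hδ.ne'
  linarith [norm_le_sqrt_norm_sq_add_sq (θ b) δ, sqrt_norm_sq_add_sq_le_norm_add (θ a) hδ.le]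

end InnerProductSpace

theorem gronwall_regularized_general
    {H : Type*} [NormedAddCommGroup H] [InnerProductSpace ℝ H]
    (T : ℝ)
    (θ : ℝ → H) (θ' : ℝ → H)
    (hθ : ∀ t ∈ Set.Icc (0 : ℝ) T, HasDerivWithinAt θ (θ' t) (Set.Icc 0 T) t)
    (hθ0 : θ 0 = 0)
    (g : ℝ → ℝ)
    (hg_cont : ContinuousOn g (Set.Icc 0 T))
    (hg_nonneg : ∀ t ∈ Set.Icc (0 : ℝ) T, 0 ≤ g t)
    (hbound : ∀ t ∈ Set.Icc (0 : ℝ) T, ⟪θ' t, θ t⟫ ≤ g t * ‖θ t‖) :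
    ∀ t ∈ Set.Icc (0 : ℝ) T, ‖θ t‖ ≤ ∫ s in (0 : ℝ)..t, g s := by
  intro t ht
  have hsub : Icc 0 t ⊆ Icc 0 T := Icc_subset_Icc_right ht.2
  have key := norm_sub_norm_le_integral_of_inner_deriv_le ht.1
    (fun s hs => (hθ s (hsub hs)).mono hsub) (hg_cont.mono hsub)
    (fun s hs => hg_nonneg s (hsub hs)) (fun s hs => hbound s (hsub hs))
  simpa [hθ0] using key

/-- Regularized Grönwall-type estimate (Thomée's technique): if θ(0) = 0 and
⟨θ'(t), θ(t)⟩ ≤ g(t)‖θ(t)‖ on [0,T] with g continuous and nonnegative, then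
‖θ(t)‖ ≤ ∫₀ᵗ g(s) ds on [0,T]. -/
theorem gronwall_regularized
    {H : Type*} [NormedAddCommGroup H] [InnerProductSpace ℝ H]
    (T : ℝ) (hT : 0 < T)
    (θ : ℝ → H) (θ' : ℝ → H)
    (hθ : ∀ t ∈ Set.Icc (0 : ℝ) T, HasDerivWithinAt θ (θ' t) (Set.Icc 0 T) t)
    (hθ0 : θ 0 = 0)
    (g : ℝ → ℝ)
    (hg_cont : ContinuousOn g (Set.Icc 0 T))
    (hg_nonneg : ∀ t ∈ Set.Icc (0 : ℝ) T, 0 ≤ g t)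
    (hbound : ∀ t ∈ Set.Icc (0 : ℝ) T, ⟪θ' t, θ t⟫ ≤ g t * ‖θ t‖) :
    ∀ t ∈ Set.Icc (0 : ℝ) T, ‖θ t‖ ≤ ∫ s in (0 : ℝ)..t, g s :=
  gronwall_regularized_general T θ θ' hθ hθ0 g hg_cont hg_nonneg hbound
end

section
/- Let W and Y be real inner product spaces, let D : Y → W be a linear map, and let W_h ⊆ W and Y_h ⊆ Y be linear subspaces. Let T > 0. Suppose θ : [0,T] → W is differentiable with θ(t) ∈ W_h for all t and θ(0) = 0, ε : [0,T] → Y satisfies ε(t) ∈ Y_h for all t, and ρ : [0,T] → W is differentiable with t ↦ ‖ρ'(t)‖ continuous. Assume that for every t ∈ [0,T]: ⟨θ'(t), φ⟩ − ⟨D ε(t), φ⟩ = −⟨ρ'(t), φ⟩ for all φ ∈ W_h, and ⟨ε(t), ω⟩ + ⟨θ(t), D ω⟩ = 0 for all ω ∈ Y_h. Then ‖θ(t)‖ ≤ ∫₀ᵗ ‖ρ'(s)‖ ds for every t ∈ [0,T]. -/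
open RealInnerProductSpace Set MeasureTheory

/-!
Testing the first error equation with `θ` and the second with `ε`, the coupling terms
`⟪D ε, θ⟫` cancel, leaving the energy identity `⟪θ', θ⟫ + ‖ε‖² = -⟪ρ', θ⟫`, so that
`½ (‖θ‖²)' ≤ ‖ρ'‖ ‖θ‖`. Since `‖θ‖` need not be differentiable where `θ` vanishes, the
Grönwall step is carried out for `√(‖θ‖² + δ²)`, whose derivative is at most `‖ρ'‖`;
integrating and letting `δ → 0` gives `‖θ t‖ ≤ ‖θ 0‖ + ∫₀ᵗ ‖ρ'‖`.
-/

section MixedErrorEquations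

variable {W Y : Type*} [NormedAddCommGroup W] [InnerProductSpace ℝ W]
  [NormedAddCommGroup Y] [InnerProductSpace ℝ Y]
  {D : Y →ₗ[ℝ] W} {Wh : Submodule ℝ W} {Yh : Submodule ℝ Y} {θ θ' r : W} {ε : Y}

theorem inner_add_norm_sq_eq_of_mixed_error_eq (hθ : θ ∈ Wh) (hε : ε ∈ Yh)
    (h1 : ∀ φ ∈ Wh, ⟪θ', φ⟫ - ⟪D ε, φ⟫ = -⟪r, φ⟫) (h2 : ∀ ω ∈ Yh, ⟪ε, ω⟫ + ⟪θ, D ω⟫ = 0) :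
    ⟪θ', θ⟫ + ‖ε‖ ^ 2 = -⟪r, θ⟫ := by
  have e1 := h1 θ hθ
  have e2 := h2 ε hε
  rw [real_inner_self_eq_norm_sq, real_inner_comm] at e2
  linarith

theorem inner_le_norm_mul_norm_of_mixed_error_eq (hθ : θ ∈ Wh) (hε : ε ∈ Yh)
    (h1 : ∀ φ ∈ Wh, ⟪θ', φ⟫ - ⟪D ε, φ⟫ = -⟪r, φ⟫) (h2 : ∀ ω ∈ Yh, ⟪ε, ω⟫ + ⟪θ, D ω⟫ = 0) :
    ⟪θ', θ⟫ ≤ ‖r‖ * ‖θ‖ := by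
  have energy := inner_add_norm_sq_eq_of_mixed_error_eq hθ hε h1 h2
  have cauchy_schwarz : -⟪r, θ⟫ ≤ ‖r‖ * ‖θ‖ := (neg_le_abs _).trans (abs_real_inner_le_norm r θ)
  nlinarith [sq_nonneg ‖ε‖]

end MixedErrorEquations

section Gronwall

variable {E : Type*} [NormedAddCommGroup E] [InnerProductSpace ℝ E]
  {f f' : ℝ → E} {g : ℝ → ℝ} {a b : ℝ}

theorem sqrt_norm_sq_add_sq_sub_le_integral_of_inner_deriv_right_le (hab : a ≤ b)
    (hf : ContinuousOn f (Icc a b)) (hf' : ∀ x ∈ Ioo a b, HasDerivWithinAt f (f' x) (Ioi x) x)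
    (hg : IntegrableOn g (Icc a b)) (hg_nonneg : ∀ x ∈ Ioo a b, 0 ≤ g x)
    (bound : ∀ x ∈ Ioo a b, ⟪f' x, f x⟫ ≤ g x * ‖f x‖) {δ : ℝ} (hδ : 0 < δ) :
    √(‖f b‖ ^ 2 + δ ^ 2) - √(‖f a‖ ^ 2 + δ ^ 2) ≤ ∫ x in a..b, g x := by
  have hpos : ∀ x, 0 < ‖f x‖ ^ 2 + δ ^ 2 := fun x => by positivity
  refine intervalIntegral.sub_le_integral_of_hasDeriv_right_of_le hab
    (((hf.norm.pow 2).add continuousOn_const).sqrt)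
    (fun x hx => ((hf' x hx).norm_sq.add_const (δ ^ 2)).sqrt (hpos x).ne') hg fun x hx => ?_
  have hs : ‖f x‖ ≤ √(‖f x‖ ^ 2 + δ ^ 2) :=
    Real.le_sqrt_of_sq_le (le_add_of_nonneg_right (sq_nonneg δ))
  have hinner : ⟪f x, f' x⟫ ≤ g x * √(‖f x‖ ^ 2 + δ ^ 2) := by
    rw [real_inner_comm]
    exact (bound x hx).trans (mul_le_mul_of_nonneg_left hs (hg_nonneg x hx))
  rw [div_le_iff₀ (by positivity)]
  linarith

theorem norm_le_norm_add_integral_of_inner_deriv_right_le (hab : a ≤ b)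
    (hf : ContinuousOn f (Icc a b)) (hf' : ∀ x ∈ Ioo a b, HasDerivWithinAt f (f' x) (Ioi x) x)
    (hg : IntegrableOn g (Icc a b)) (hg_nonneg : ∀ x ∈ Ioo a b, 0 ≤ g x)
    (bound : ∀ x ∈ Ioo a b, ⟪f' x, f x⟫ ≤ g x * ‖f x‖) :
    ‖f b‖ ≤ ‖f a‖ + ∫ x in a..b, g x := by
  refine le_of_forall_pos_le_add fun δ hδ => ?_
  have regularized :=
    sqrt_norm_sq_add_sq_sub_le_integral_of_inner_deriv_right_le hab hf hf' hg hg_nonneg bound hδ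
  have upper : √(‖f a‖ ^ 2 + δ ^ 2) ≤ ‖f a‖ + δ :=
    Real.sqrt_le_iff.2 ⟨by positivity, by nlinarith [norm_nonneg (f a), hδ.le]⟩
  have lower : ‖f b‖ ≤ √(‖f b‖ ^ 2 + δ ^ 2) :=
    Real.le_sqrt_of_sq_le (le_add_of_nonneg_right (sq_nonneg δ))
  linarith

end Gronwall

theorem theta_bound_parabolic_general
    {W Y : Type*} [NormedAddCommGroup W] [InnerProductSpace ℝ W]
    [NormedAddCommGroup Y] [InnerProductSpace ℝ Y]
    (D : Y →ₗ[ℝ] W) (Wh : Submodule ℝ W) (Yh : Submodule ℝ Y)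
    (T : ℝ)
    (θ : ℝ → W) (θ' : ℝ → W)
    (hθ : ∀ t ∈ Set.Icc (0 : ℝ) T, HasDerivWithinAt θ (θ' t) (Set.Icc 0 T) t)
    (hθ_mem : ∀ t ∈ Set.Icc (0 : ℝ) T, θ t ∈ Wh)
    (hθ0 : θ 0 = 0)
    (ε : ℝ → Y)
    (hε_mem : ∀ t ∈ Set.Icc (0 : ℝ) T, ε t ∈ Yh)
    (ρ' : ℝ → W)
    (hρ'_cont : ContinuousOn (fun t => ‖ρ' t‖) (Set.Icc 0 T))
    (h1 : ∀ t ∈ Set.Icc (0 : ℝ) T, ∀ φ ∈ Wh,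
      ⟪θ' t, φ⟫ - ⟪D (ε t), φ⟫ = -⟪ρ' t, φ⟫)
    (h2 : ∀ t ∈ Set.Icc (0 : ℝ) T, ∀ ω ∈ Yh,
      ⟪ε t, ω⟫ + ⟪θ t, D ω⟫ = 0) :
    ∀ t ∈ Set.Icc (0 : ℝ) T, ‖θ t‖ ≤ ∫ s in (0 : ℝ)..t, ‖ρ' s‖ := by
  intro t ht
  have sub : Icc 0 t ⊆ Icc 0 T := Icc_subset_Icc_right ht.2
  have mem : ∀ x ∈ Ioo 0 t, x ∈ Icc 0 T := fun x hx => sub (Ioo_subset_Icc_self hx)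
  have hθ_cont : ContinuousOn θ (Icc 0 t) := fun x hx =>
    (hθ x (sub hx)).continuousWithinAt.mono sub
  have hθ_right : ∀ x ∈ Ioo 0 t, HasDerivWithinAt θ (θ' x) (Ioi x) x := fun x hx =>
    (hθ x (mem x hx)).mono_of_mem_nhdsWithin (Icc_mem_nhdsGT_of_mem ⟨hx.1.le, hx.2.trans_le ht.2⟩)
  simpa [hθ0] using norm_le_norm_add_integral_of_inner_deriv_right_le ht.1 hθ_cont hθ_right
    ((hρ'_cont.mono sub).integrableOn_Icc) (fun _ _ => norm_nonneg _) fun x hx =>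
      inner_le_norm_mul_norm_of_mixed_error_eq (hθ_mem x (mem x hx)) (hε_mem x (mem x hx))
        (h1 x (mem x hx)) (h2 x (mem x hx))

/-- Key intermediate bound in the parabolic error estimate (Theorem 5.2): the
error equations together with θ(0) = 0 imply ‖θ(t)‖ ≤ ∫₀ᵗ ‖ρ'(s)‖ ds. -/
theorem theta_bound_parabolic
    {W Y : Type*} [NormedAddCommGroup W] [InnerProductSpace ℝ W]
    [NormedAddCommGroup Y] [InnerProductSpace ℝ Y]
    (D : Y →ₗ[ℝ] W) (Wh : Submodule ℝ W) (Yh : Submodule ℝ Y)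
    (T : ℝ) (hT : 0 < T)
    (θ : ℝ → W) (θ' : ℝ → W)
    (hθ : ∀ t ∈ Set.Icc (0 : ℝ) T, HasDerivWithinAt θ (θ' t) (Set.Icc 0 T) t)
    (hθ_mem : ∀ t ∈ Set.Icc (0 : ℝ) T, θ t ∈ Wh)
    (hθ0 : θ 0 = 0)
    (ε : ℝ → Y)
    (hε_mem : ∀ t ∈ Set.Icc (0 : ℝ) T, ε t ∈ Yh)
    (ρ : ℝ → W) (ρ' : ℝ → W)
    (hρ : ∀ t ∈ Set.Icc (0 : ℝ) T, HasDerivWithinAt ρ (ρ' t) (Set.Icc 0 T) t)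
    (hρ'_cont : ContinuousOn (fun t => ‖ρ' t‖) (Set.Icc 0 T))
    (h1 : ∀ t ∈ Set.Icc (0 : ℝ) T, ∀ φ ∈ Wh,
      ⟪θ' t, φ⟫ - ⟪D (ε t), φ⟫ = -⟪ρ' t, φ⟫)
    (h2 : ∀ t ∈ Set.Icc (0 : ℝ) T, ∀ ω ∈ Yh,
      ⟪ε t, ω⟫ + ⟪θ t, D ω⟫ = 0) :
    ∀ t ∈ Set.Icc (0 : ℝ) T, ‖θ t‖ ≤ ∫ s in (0 : ℝ)..t, ‖ρ' s‖ :=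
  theta_bound_parabolic_general D Wh Yh T θ θ' hθ hθ_mem hθ0 ε hε_mem ρ' hρ'_cont h1 h2
end
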